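/- Let 𝔤 = 𝔤⁰_{3.4} ⊕ 𝔤₁ be the 4-dimensional real Lie algebra with basis e₁,...,e₄ and nonzero brackets [e₂,e₃] = e₁ and [e₃,e₁] = −e₂. A 4×4 real matrix R equals η·Id + D for some η ∈ ℝ and some derivation D of 𝔤 if and only if R₃₁ = R₄₁ = R₃₂ = R₄₂ = 0, R₁₄ = R₂₄ = R₃₄ = 0, R₂₁ = R₁₂, and R₂₂ = R₁₁. In this case η = R₃₃. -/

import Mathlib

open Matrix

/-- The Lie bracket of the Lie algebra, in coordinates. -/
def br (x y : Fin 4 → ℝ) : Fin 4 → ℝ :=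
  ![(x 1 * y 2 - x 2 * y 1), -(x 2 * y 0 - x 0 * y 2), (0:ℝ), (0:ℝ)]

/-- `D` (acting via `mulVec`) is a derivation of the bracket. -/
def IsDer (D : Matrix (Fin 4) (Fin 4) ℝ) : Prop :=
  ∀ x y : Fin 4 → ℝ, D.mulVec (br x y) = br (D.mulVec x) y + br x (D.mulVec y)

/-!
Evaluated on basis pairs, the derivation identity becomes linear conditions on the entries of `D`.
`D` preserves the derived algebra `⟨e₁, e₂⟩` and the centre `⟨e₄⟩`, and on `⟨e₁, e₂⟩` it
satisfies `[D, A] = D₃₃ • A` for `A = ad e₃`. As `A² = 1`, the matrix `A [D, A] = A D A - D` is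
traceless, which forces `D₃₃ = 0`; then `D` commutes with `A`, i.e. has the form `!![a, b; b, a]`.
Since `η • 1` only shifts the diagonal, `R - η • 1` is a derivation exactly when `R` satisfies the
listed conditions and `η = R₃₃`.
-/

lemma isDer_iff (D : Matrix (Fin 4) (Fin 4) ℝ) :
    IsDer D ↔ D 2 0 = 0 ∧ D 3 0 = 0 ∧ D 2 1 = 0 ∧ D 3 1 = 0 ∧ D 0 3 = 0 ∧ D 1 3 = 0 ∧
      D 2 3 = 0 ∧ D 1 0 = D 0 1 ∧ D 1 1 = D 0 0 ∧ D 2 2 = 0 := by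
  constructor
  · intro hD
    have he₁e₃ := hD ![1, 0, 0, 0] ![0, 0, 1, 0]
    have he₂e₃ := hD ![0, 1, 0, 0] ![0, 0, 1, 0]
    have he₂e₄ := hD ![0, 1, 0, 0] ![0, 0, 0, 1]
    have he₃e₄ := hD ![0, 0, 1, 0] ![0, 0, 0, 1]
    simp only [br, Fin.isValue, cons_val_one, cons_val_zero, cons_val, mul_one, mul_zero,
      sub_self, zero_sub, neg_neg, mulVec, dotProduct, Fin.sum_univ_four, add_zero, sub_zero,
      zero_add, zero_mul, one_mul, add_cons, head_cons, tail_cons, empty_add_empty, funext_iff,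
      Fin.forall_fin_succ, cons_val_succ, Fin.succ_zero_eq_one, Fin.succ_one_eq_two,
      cons_val_fin_one, Fin.reduceSucc, IsEmpty.forall_iff, and_true, neg_zero, implies_true,
      and_self, zero_eq_neg] at he₁e₃ he₂e₃ he₂e₄ he₃e₄
    obtain ⟨-, h11, h21, h31⟩ := he₁e₃
    obtain ⟨h00, h10, h20, h30⟩ := he₂e₃
    obtain ⟨h13, h03⟩ := he₃e₄
    exact ⟨h20, h30, h21, h31, h03, h13, he₂e₄.symm, h10, by linarith, by linarith⟩
  · rintro ⟨h20, h30, h21, h31, h03, h13, h23, h10, h11, h22⟩ x y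
    ext i
    fin_cases i <;>
      simp only [br, mulVec, dotProduct, Fin.sum_univ_four, Fin.isValue, Fin.zero_eta, Fin.mk_one,
        Fin.reduceFinMk, neg_sub, cons_val_zero, cons_val_one, cons_val, Pi.add_apply, mul_zero,
        zero_mul, add_zero, sub_zero, zero_sub, neg_neg, h20, h30, h21, h31, h03, h13, h23, h10,
        h11, h22] <;> ring

lemma isDer_sub_smul_one_iff (R : Matrix (Fin 4) (Fin 4) ℝ) (η : ℝ) :
    IsDer (R - η • 1) ↔ (R 2 0 = 0 ∧ R 3 0 = 0 ∧ R 2 1 = 0 ∧ R 3 1 = 0 ∧ R 0 3 = 0 ∧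
      R 1 3 = 0 ∧ R 2 3 = 0 ∧ R 1 0 = R 0 1 ∧ R 1 1 = R 0 0) ∧ η = R 2 2 := by
  rw [isDer_iff]
  simp [one_apply, sub_eq_zero, eq_comm (a := η), and_assoc]

theorem stmt_5 (R : Matrix (Fin 4) (Fin 4) ℝ) :
    ((∃ (η : ℝ) (D : Matrix (Fin 4) (Fin 4) ℝ), IsDer D ∧
        R = η • (1 : Matrix (Fin 4) (Fin 4) ℝ) + D) ↔
      (R 2 0 = 0 ∧ R 3 0 = 0 ∧ R 2 1 = 0 ∧ R 3 1 = 0 ∧ R 0 3 = 0 ∧ R 1 3 = 0 ∧ R 2 3 = 0 ∧ R 1 0 = R 0 1 ∧ R 1 1 = R 0 0)) ∧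
    (∀ (η : ℝ) (D : Matrix (Fin 4) (Fin 4) ℝ), IsDer D →
      R = η • (1 : Matrix (Fin 4) (Fin 4) ℝ) + D → η = R 2 2) := by
  have of_decomposition : ∀ (η : ℝ) (D : Matrix (Fin 4) (Fin 4) ℝ), IsDer D →
      R = η • 1 + D → IsDer (R - η • 1) := by
    rintro η D hD rfl
    rwa [add_sub_cancel_left]
  refine ⟨⟨?_, fun h => ?_⟩, fun η D hD hR => ?_⟩
  · rintro ⟨η, D, hD, hR⟩
    exact ((isDer_sub_smul_one_iff R η).1 (of_decomposition η D hD hR)).1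
  · exact ⟨R 2 2, R - R 2 2 • 1, (isDer_sub_smul_one_iff R _).2 ⟨h, rfl⟩, by abel⟩
  · exact ((isDer_sub_smul_one_iff R η).1 (of_decomposition η D hD hR)).2
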